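/- Let P be a poset and (G,f) a minimal P-filtered graph (no collapsible edges and no deletable edges). Then the sequence ⊕_{e∈E} P_{f(e)}·{e} → ⊕_{v∈V} P_{f(v)}·{v} → H₀(G,f), where the first map sends {e} to {e₁} - {e₀} and the second sends {v} to [v], is a minimal projective presentation; in particular β₀(H₀(G,f)) = Σ_{v∈V} δ_{f(v)} and β₁(H₀(G,f)) = Σ_{e∈E} δ_{f(e)}. -/

import Mathlib

structure Grph where
  V : Type
  E : Type
  [fintV : Fintype V]
  [fintE : Fintype E]
  [decV : DecidableEq V]
  [decE : DecidableEq E]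
  bnd : E → V × V

attribute [instance] Grph.fintV Grph.fintE Grph.decV Grph.decE

/-- boundary map k⟨E⟩ → k⟨V⟩, e ↦ e₁ - e₀ -/
noncomputable def Grph.d (G : Grph) (k : Type) [Field k] :
    (G.E →₀ k) →ₗ[k] (G.V →₀ k) :=
  Finsupp.linearCombination k fun e =>
    Finsupp.single (G.bnd e).2 1 - Finsupp.single (G.bnd e).1 1

def Grph.adj (G : Grph) (v w : G.V) : Prop :=
  ∃ e, G.bnd e = (v, w) ∨ G.bnd e = (w, v)

structure FGrph (P : Type) [PartialOrder P] extends Grph where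
  fV : V → P
  fE : E → P
  mono0 : ∀ e, fV (bnd e).1 ≤ fE e
  mono1 : ∀ e, fV (bnd e).2 ≤ fE e

variable {P : Type} [PartialOrder P]

/-- boundary map of the sublevel graph at grade r -/
noncomputable def FGrph.dr (G : FGrph P) (k : Type) [Field k] (r : P) :
    ({e : G.E // G.fE e ≤ r} →₀ k) →ₗ[k] ({v : G.V // G.fV v ≤ r} →₀ k) :=
  Finsupp.linearCombination k fun e =>
    Finsupp.single ⟨(G.bnd e.1).2, le_trans (G.mono1 e.1) e.2⟩ 1 -
    Finsupp.single ⟨(G.bnd e.1).1, le_trans (G.mono0 e.1) e.2⟩ 1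

noncomputable def FGrph.vmap (G : FGrph P) (k : Type) [Field k] {r s : P} (h : r ≤ s) :
    ({v : G.V // G.fV v ≤ r} →₀ k) →ₗ[k] ({v : G.V // G.fV v ≤ s} →₀ k) :=
  Finsupp.lmapDomain k k fun v => ⟨v.1, le_trans v.2 h⟩

noncomputable def FGrph.emap (G : FGrph P) (k : Type) [Field k] {r s : P} (h : r ≤ s) :
    ({e : G.E // G.fE e ≤ r} →₀ k) →ₗ[k] ({e : G.E // G.fE e ≤ s} →₀ k) :=
  Finsupp.lmapDomain k k fun e => ⟨e.1, le_trans e.2 h⟩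

lemma FGrph.dNat (G : FGrph P) (k : Type) [Field k] {r s : P} (h : r ≤ s) :
    (G.dr k s).comp (G.emap k h) = (G.vmap k h).comp (G.dr k r) := by
  apply Finsupp.lhom_ext
  intro e a
  show (G.dr k s) ((G.emap k h) (Finsupp.single e a)) =
    (G.vmap k h) ((G.dr k r) (Finsupp.single e a))
  rw [FGrph.emap, Finsupp.lmapDomain_apply, Finsupp.mapDomain_single, FGrph.dr,
    Finsupp.linearCombination_single, FGrph.dr, Finsupp.linearCombination_single,
    map_smul, map_sub, FGrph.vmap, Finsupp.lmapDomain_apply, Finsupp.lmapDomain_apply,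
    Finsupp.mapDomain_single, Finsupp.mapDomain_single]

/-- 0-dim homology of the sublevel graph at r -/
noncomputable abbrev FGrph.H0at (G : FGrph P) (k : Type) [Field k] (r : P) :=
  ({v : G.V // G.fV v ≤ r} →₀ k) ⧸ LinearMap.range (G.dr k r)

noncomputable def FGrph.H0map (G : FGrph P) (k : Type) [Field k] {r s : P} (h : r ≤ s) :
    G.H0at k r →ₗ[k] G.H0at k s :=
  Submodule.mapQ _ _ (G.vmap k h) (by
    rintro x ⟨y, rfl⟩
    exact ⟨G.emap k h y, by
      have := LinearMap.congr_fun (G.dNat k h) y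
      simpa using this⟩)

noncomputable abbrev FGrph.H1at (G : FGrph P) (k : Type) [Field k] (r : P) :=
  LinearMap.ker (G.dr k r)

noncomputable def FGrph.H1map (G : FGrph P) (k : Type) [Field k] {r s : P} (h : r ≤ s) :
    G.H1at k r →ₗ[k] G.H1at k s :=
  (G.emap k h).restrict (p := LinearMap.ker (G.dr k r)) (q := LinearMap.ker (G.dr k s))
    (by
      intro x hx
      have := LinearMap.congr_fun (G.dNat k h) x
      simp only [LinearMap.mem_ker] at hx ⊢
      simp only [LinearMap.coe_comp, Function.comp_apply] at this
      rw [this, hx, map_zero])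

def FGrph.adjAt (G : FGrph P) (r : P) (a b : G.V) : Prop :=
  ∃ e, G.fE e ≤ r ∧ (G.bnd e = (a, b) ∨ G.bnd e = (b, a))

def FGrph.connAt (G : FGrph P) (r : P) : G.V → G.V → Prop :=
  Relation.ReflTransGen (G.adjAt r)

def FGrph.pi0At (G : FGrph P) (r : P) :=
  Quot (fun a b : {v : G.V // G.fV v ≤ r} => G.adjAt r a.1 b.1)

def FGrph.Collapsible (G : FGrph P) (e : G.E) : Prop :=
  (G.bnd e).1 ≠ (G.bnd e).2 ∧
    (G.fE e = G.fV (G.bnd e).1 ∨ G.fE e = G.fV (G.bnd e).2)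

def FGrph.delete (G : FGrph P) (e : G.E) : FGrph P where
  V := G.V
  E := {d : G.E // d ≠ e}
  bnd d := G.bnd d.1
  fV := G.fV
  fE d := G.fE d.1
  mono0 d := G.mono0 d.1
  mono1 d := G.mono1 d.1

def FGrph.Deletable (G : FGrph P) (e : G.E) : Prop :=
  (G.delete e).connAt (G.fE e) (G.bnd e).1 (G.bnd e).2

def FGrph.collapse (G : FGrph P) (e : G.E) (x y : G.V) (hxy : y ≠ x)
    (hf : G.fV y ≤ G.fV x) : FGrph P where
  V := {v : G.V // v ≠ x}
  E := {d : G.E // d ≠ e}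
  bnd d :=
    (if h : (G.bnd d.1).1 = x then ⟨y, hxy⟩ else ⟨(G.bnd d.1).1, h⟩,
     if h : (G.bnd d.1).2 = x then ⟨y, hxy⟩ else ⟨(G.bnd d.1).2, h⟩)
  fV v := G.fV v.1
  fE d := G.fE d.1
  mono0 d := by
    dsimp only
    split
    · exact le_trans hf (by rw [← ‹(G.bnd d.1).1 = x›]; exact G.mono0 d.1)
    · exact G.mono0 d.1
  mono1 d := by
    dsimp only
    split
    · exact le_trans hf (by rw [← ‹(G.bnd d.1).2 = x›]; exact G.mono1 d.1)
    · exact G.mono1 d.1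

/-- A `P`-persistence module: a functor `P → Vec_k`, given explicitly. -/
structure PersMod (P : Type) [PartialOrder P] (k : Type) [Field k] : Type 1 where
  obj : P → Type
  [acg : ∀ r, AddCommGroup (obj r)]
  [mod : ∀ r, Module k (obj r)]
  map : ∀ {r s : P}, r ≤ s → (obj r →ₗ[k] obj s)
  map_refl : ∀ (r : P) (x : obj r), map (le_refl r) x = x
  map_trans : ∀ {r s t : P} (h1 : r ≤ s) (h2 : s ≤ t) (x : obj r),
    map h2 (map h1 x) = map (le_trans h1 h2) x

attribute [instance] PersMod.acg PersMod.mod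

variable {P : Type} [PartialOrder P]

/-- A morphism of persistence modules: a natural transformation. -/
structure PersHom (k : Type) [Field k] (M N : PersMod P k) where
  app : ∀ r : P, M.obj r →ₗ[k] N.obj r
  nat : ∀ {r s : P} (h : r ≤ s) (x : M.obj r),
    app s (M.map h x) = N.map h (app r x)

/-- The finite direct sum of indicator projectives `⊕_{i ∈ I} P_{f i}`:
at grade `r` it is the free vector space on `{i // f i ≤ r}`, with structure maps
induced by the inclusions of index sets.  For `I = Unit` this is the indicator
projective `P_{f ()}` itself. -/
noncomputable def freePers (k : Type) [Field k] (I : Type) (f : I → P) : PersMod P k where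
  obj r := {i : I // f i ≤ r} →₀ k
  map h := Finsupp.lmapDomain k k fun i => ⟨i.1, le_trans i.2 h⟩
  map_refl r x := by
    rw [Finsupp.lmapDomain_apply,
      show (fun i : {i : I // f i ≤ r} => (⟨i.1, le_trans i.2 (le_refl r)⟩ :
        {i : I // f i ≤ r})) = id from rfl, Finsupp.mapDomain_id]
  map_trans h1 h2 x := by
    rw [Finsupp.lmapDomain_apply, Finsupp.lmapDomain_apply, Finsupp.lmapDomain_apply,
      ← Finsupp.mapDomain_comp]
    rfl

/-- A morphism of persistence modules is surjective if it is so at every grade. -/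
def PersHom.Surj {k : Type} [Field k] {M N : PersMod P k} (g : PersHom k M N) : Prop :=
  ∀ r : P, Function.Surjective (g.app r)
/-- `g : ⊕_{i∈I} P_{f i} → M` is a finite projective cover: it is surjective and the
total number of indecomposable summands is minimal among all such surjections. -/
def IsProjCover {k : Type} [Field k] {I : Type} [Fintype I] (f : I → P) (M : PersMod P k)
    (g : PersHom k (freePers k I f) M) : Prop :=
  g.Surj ∧ ∀ (J : Type) (_ : Fintype J) (f' : J → P)
    (g' : PersHom k (freePers k J f') M), g'.Surj →
      Fintype.card I ≤ Fintype.card J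
/-- H₀ of a filtered graph as a persistence module -/
noncomputable def FGrph.H0Mod (G : FGrph P) (k : Type) [Field k] : PersMod P k where
  obj r := G.H0at k r
  map h := G.H0map k h
  map_refl r x := by
    obtain ⟨y, rfl⟩ := Submodule.Quotient.mk_surjective _ x
    show G.H0map k (le_refl r) (Submodule.Quotient.mk y) = Submodule.Quotient.mk y
    rw [FGrph.H0map, Submodule.mapQ_apply]
    congr 1
    rw [FGrph.vmap, Finsupp.lmapDomain_apply,
      show (fun v : {v : G.V // G.fV v ≤ r} => (⟨v.1, le_trans v.2 (le_refl r)⟩ :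
        {v : G.V // G.fV v ≤ r})) = id from rfl, Finsupp.mapDomain_id]
  map_trans h1 h2 x := by
    obtain ⟨y, rfl⟩ := Submodule.Quotient.mk_surjective _ x
    show G.H0map k h2 (G.H0map k h1 (Submodule.Quotient.mk y)) =
      G.H0map k (le_trans h1 h2) (Submodule.Quotient.mk y)
    rw [FGrph.H0map, FGrph.H0map, FGrph.H0map, Submodule.mapQ_apply,
      Submodule.mapQ_apply, Submodule.mapQ_apply]
    congr 1
    rw [FGrph.vmap, FGrph.vmap, FGrph.vmap, Finsupp.lmapDomain_apply,
      Finsupp.lmapDomain_apply, Finsupp.lmapDomain_apply, ← Finsupp.mapDomain_comp]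
    rfl

/-- The canonical surjection `⊕_{v∈V} P_{f(v)} → H₀(G,f)`, sending `{v}` to `[v]`. -/
noncomputable def FGrph.covHom (G : FGrph P) (k : Type) [Field k] :
    PersHom k (freePers k G.V G.fV) (G.H0Mod k) where
  app r := (LinearMap.range (G.dr k r)).mkQ
  nat {r s} h x := by
    show (LinearMap.range (G.dr k s)).mkQ ((freePers k G.V G.fV).map h x) =
      G.H0map k h ((LinearMap.range (G.dr k r)).mkQ x)
    first
      | rfl
      | exact (Submodule.mapQ_apply _ _ _ _ x).symm

/-- The kernel of the projective cover `⊕_v P_{f(v)} → H₀(G,f)`, i.e. the image of the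
boundary map, as a persistence module. -/
noncomputable def FGrph.KMod (G : FGrph P) (k : Type) [Field k] : PersMod P k where
  obj r := ↥(LinearMap.range (G.dr k r))
  map {r s} h := (G.vmap k h).restrict
    (p := LinearMap.range (G.dr k r)) (q := LinearMap.range (G.dr k s)) (by
      rintro x ⟨y, rfl⟩
      exact ⟨G.emap k h y, by
        have := LinearMap.congr_fun (G.dNat k h) y
        simpa using this⟩)
  map_refl r x := Subtype.ext (by
    show (G.vmap k (le_refl r)) x.1 = x.1
    rw [FGrph.vmap, Finsupp.lmapDomain_apply,
      show (fun v : {v : G.V // G.fV v ≤ r} => (⟨v.1, le_trans v.2 (le_refl r)⟩ :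
        {v : G.V // G.fV v ≤ r})) = id from rfl, Finsupp.mapDomain_id])
  map_trans {r s t} h1 h2 x := Subtype.ext (by
    show (G.vmap k h2) ((G.vmap k h1) x.1) = (G.vmap k (le_trans h1 h2)) x.1
    rw [FGrph.vmap, FGrph.vmap, FGrph.vmap, Finsupp.lmapDomain_apply,
      Finsupp.lmapDomain_apply, Finsupp.lmapDomain_apply, ← Finsupp.mapDomain_comp]
    rfl)

/-- The morphism `⊕_{e∈E} P_{f(e)} → ker(⊕_v P_{f(v)} → H₀(G,f))` induced by
`{e} ↦ {e₁} - {e₀}`. -/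
noncomputable def FGrph.kerCov (G : FGrph P) (k : Type) [Field k] :
    PersHom k (freePers k G.E G.fE) (G.KMod k) where
  app r := (G.dr k r).rangeRestrict
  nat {r s} h x := Subtype.ext (by
    show (G.dr k s) ((freePers k G.E G.fE).map h x) = (G.vmap k h) ((G.dr k r) x)
    exact LinearMap.congr_fun (G.dNat k h) x)

/-! For a persistence module `M`, let `rad_p M ⊆ M_p` be the sum of the images of all `M_r`,
`r < p`. Under any surjection `⊕ⱼ P_{f j} → M` the generators born strictly below `p` land in
`rad_p M`, so at least `dim (M_p ⧸ rad_p M)` summands are born at `p`. Both maps of the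
presentation attain this bound. In `H₀`, the classes of the vertices born at `p` are separated
modulo the radical by their coefficients, which vanish on boundaries because an edge of grade
`p` at a vertex born at `p` would be collapsible. In the kernel, the boundary of an edge `e`
born at `p` is detected by the indicator of the component of `e₀` in the sublevel graph at `p`
without `e`: it vanishes on the boundary of every other edge of grade `≤ p`, and not on that of
`e`, since `e` is not deletable. Comparing fibre counts gives minimality and the Betti numbers. -/

open Module

section Counting

variable {I J β : Type*} [Fintype I] [Fintype J]

lemma Fintype.card_eq_sum_natCard_fiber (f : I → β) {A : Finset β}
    (hA : ∀ i, f i ∈ A) : Fintype.card I = ∑ b ∈ A, Nat.card {i : I // f i = b} := by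
  classical
  rw [← Finset.card_univ, Finset.card_eq_sum_card_fiberwise fun i _ => hA i]
  refine Finset.sum_congr rfl fun b _ => ?_
  rw [Nat.card_eq_fintype_card, Fintype.card_subtype]

lemma Fintype.card_le_card_of_natCard_fiber_le {f : I → β} {g : J → β}
    (hle : ∀ b, Nat.card {i : I // f i = b} ≤ Nat.card {j : J // g j = b}) :
    Fintype.card I ≤ Fintype.card J := by
  classical
  let A := Finset.univ.image f ∪ Finset.univ.image g
  rw [Fintype.card_eq_sum_natCard_fiber f (A := A) (by simp [A]),
    Fintype.card_eq_sum_natCard_fiber g (A := A) (by simp [A])]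
  exact Finset.sum_le_sum fun b _ => hle b

lemma natCard_fiber_eq_of_le_of_card_le {f : I → β} {g : J → β}
    (hle : ∀ b, Nat.card {i : I // f i = b} ≤ Nat.card {j : J // g j = b})
    (hcard : Fintype.card J ≤ Fintype.card I) (b : β) :
    Nat.card {j : J // g j = b} = Nat.card {i : I // f i = b} := by
  classical
  let A := Finset.univ.image f ∪ Finset.univ.image g
  have hf : ∀ i, f i ∈ A := by simp [A]
  have hg : ∀ j, g j ∈ A := by simp [A]
  by_cases hb : b ∈ A
  · have hsum :
        ∑ c ∈ A, Nat.card {i : I // f i = c} = ∑ c ∈ A, Nat.card {j : J // g j = c} := by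
      rw [← Fintype.card_eq_sum_natCard_fiber f hf, ← Fintype.card_eq_sum_natCard_fiber g hg]
      exact (Fintype.card_le_card_of_natCard_fiber_le hle).antisymm hcard
    exact ((Finset.sum_eq_sum_iff_of_le fun c _ => hle c).mp hsum b hb).symm
  · have hI : IsEmpty {i : I // f i = b} := ⟨fun i => hb (i.2 ▸ hf i.1)⟩
    have hJ : IsEmpty {j : J // g j = b} := ⟨fun j => hb (j.2 ▸ hg j.1)⟩
    simp only [Nat.card_of_isEmpty]

end Counting

section Biorthogonal

variable {k V ι : Type*} [Field k] [AddCommGroup V] [Module k V]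

lemma linearIndependent_of_biorthogonal (x : ι → V) (φ : ι → V →ₗ[k] k)
    (hoff : ∀ i j, i ≠ j → φ i (x j) = 0) (hdiag : ∀ i, φ i (x i) ≠ 0) :
    LinearIndependent k x := by
  classical
  rw [linearIndependent_iff']
  intro s c hc i hi
  have h := congrArg (φ i) hc
  rw [map_sum, map_zero, Finset.sum_eq_single i (fun j _ hji => by
    rw [map_smul, hoff i j hji.symm, smul_zero]) (absurd hi), map_smul, smul_eq_mul] at h
  exact (mul_eq_zero.mp h).resolve_right (hdiag i)

lemma natCard_le_finrank_quotient_of_biorthogonal [Module.Finite k V] [Finite ι]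
    (N : Submodule k V) (x : ι → V) (φ : ι → V →ₗ[k] k)
    (hN : ∀ i, N ≤ LinearMap.ker (φ i)) (hoff : ∀ i j, i ≠ j → φ i (x j) = 0)
    (hdiag : ∀ i, φ i (x i) ≠ 0) :
    Nat.card ι ≤ finrank k (V ⧸ N) := by
  have := Fintype.ofFinite ι
  rw [Nat.card_eq_fintype_card]
  exact (linearIndependent_of_biorthogonal (N.mkQ ∘ x) (fun i => N.liftQ (φ i) (hN i))
    hoff hdiag).fintype_card_le_finrank

end Biorthogonal

namespace PersMod

variable {k : Type} [Field k]

/-- `M_p ⧸ rad_p M` is the space of generators that `M` needs at grade `p`: its dimension is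
`β₀(M)(p)`. -/
def rad (M : PersMod P k) (p : P) : Submodule k (M.obj p) :=
  ⨆ r : {r : P // r < p}, LinearMap.range (M.map r.2.le)

lemma rad_le_ker_iff {M : PersMod P k} {p : P} {W : Type*} [AddCommGroup W] [Module k W]
    (φ : M.obj p →ₗ[k] W) :
    M.rad p ≤ LinearMap.ker φ ↔ ∀ r (hr : r < p) x, φ (M.map hr.le x) = 0 := by
  simp [rad, iSup_le_iff, LinearMap.range_le_ker_iff, LinearMap.ext_iff]

end PersMod

namespace PersHom

variable {k : Type} [Field k]

lemma finrank_quotient_rad_le {J : Type} [Fintype J] {fJ : J → P} {M : PersMod P k}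
    (g : PersHom k (freePers k J fJ) M) (hg : g.Surj) (p : P) :
    finrank k (M.obj p ⧸ M.rad p) ≤ Nat.card {j : J // fJ j = p} := by
  let T : ({j : J // fJ j ≤ p} →₀ k) →ₗ[k] M.obj p ⧸ M.rad p :=
    (M.rad p).mkQ ∘ₗ g.app p
  have hT : LinearMap.range T = ⊤ :=
    LinearMap.range_eq_top.mpr ((Submodule.mkQ_surjective _).comp (hg p))
  -- a generator born strictly below `p` is pushed up from there, so lands in the radical
  have hlow : ∀ j : {j : J // fJ j ≤ p}, fJ j < p → T (Finsupp.single j 1) = 0 := by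
    intro j hj
    have hpush : (Finsupp.single j 1 : (freePers k J fJ).obj p) =
        (freePers k J fJ).map hj.le (Finsupp.single ⟨j.1, le_rfl⟩ 1) := by
      show _ = Finsupp.mapDomain _ _
      rw [Finsupp.mapDomain_single]
    show (M.rad p).mkQ (g.app p _) = 0
    rw [Submodule.mkQ_apply, Submodule.Quotient.mk_eq_zero, hpush]
    refine (congrArg (· ∈ M.rad p) (g.nat hj.le _)).mpr ?_
    exact (le_iSup (fun r : {r : P // r < p} => LinearMap.range (M.map r.2.le)) ⟨_, hj⟩)
      ⟨_, rfl⟩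
  let b : {j : J // fJ j = p} → M.obj p ⧸ M.rad p :=
    fun j => T (Finsupp.single ⟨j.1, j.2.le⟩ 1)
  have hspan : Submodule.span k (Set.range b) = ⊤ := by
    rw [eq_top_iff, ← hT, LinearMap.range_eq_map, ← Finsupp.basisSingleOne.span_eq,
      Submodule.map_span, Submodule.span_le]
    rintro _ ⟨_, ⟨j, rfl⟩, rfl⟩
    rcases j.2.eq_or_lt with hj | hj
    · exact Submodule.subset_span ⟨⟨j.1, hj⟩, rfl⟩
    · simp [hlow j hj]
  have := Fintype.ofFinite {j : J // fJ j = p}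
  calc finrank k (M.obj p ⧸ M.rad p) = (Set.range b).finrank k := by
        rw [Set.finrank, hspan, finrank_top]
    _ ≤ Nat.card {j : J // fJ j = p} := by
        rw [Nat.card_eq_fintype_card]; exact finrank_range_le_card _

end PersHom

namespace FGrph

variable (G : FGrph P) (k : Type) [Field k]

lemma dr_single {r : P} (e : {e : G.E // G.fE e ≤ r}) :
    G.dr k r (Finsupp.single e 1) =
      Finsupp.single ⟨(G.bnd e.1).2, (G.mono1 e.1).trans e.2⟩ 1 -
        Finsupp.single ⟨(G.bnd e.1).1, (G.mono0 e.1).trans e.2⟩ 1 := by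
  rw [dr, Finsupp.linearCombination_single, one_smul]

lemma lapply_comp_dr_eq_zero (hC : ∀ e, ¬ G.Collapsible e) {p : P}
    (v : {v : G.V // G.fV v ≤ p}) (hv : G.fV v.1 = p) :
    Finsupp.lapply v ∘ₗ G.dr k p = 0 := by
  refine Finsupp.lhom_ext fun e a => ?_
  rw [LinearMap.comp_apply, ← mul_one a, ← smul_eq_mul, ← Finsupp.smul_single, map_smul,
    map_smul, dr_single, LinearMap.zero_apply]
  by_cases hloop : (G.bnd e.1).1 = (G.bnd e.1).2
  · simp [hloop]
  -- an edge of grade `≤ p` at a vertex born at `p` would be collapsible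
  have hs : v ≠ ⟨(G.bnd e.1).1, (G.mono0 e.1).trans e.2⟩ := fun h =>
    hC e.1 ⟨hloop, Or.inl (le_antisymm (e.2.trans (h ▸ hv).ge) (G.mono0 e.1))⟩
  have ht : v ≠ ⟨(G.bnd e.1).2, (G.mono1 e.1).trans e.2⟩ := fun h =>
    hC e.1 ⟨hloop, Or.inr (le_antisymm (e.2.trans (h ▸ hv).ge) (G.mono1 e.1))⟩
  simp [Finsupp.single_eq_of_ne hs, Finsupp.single_eq_of_ne ht]

lemma natCard_fV_fiber_le_finrank (hC : ∀ e, ¬ G.Collapsible e) (p : P) :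
    Nat.card {v : G.V // G.fV v = p} ≤
      finrank k ((G.H0Mod k).obj p ⧸ (G.H0Mod k).rad p) := by
  have : Module.Finite k ((G.H0Mod k).obj p) := inferInstanceAs (Module.Finite k (G.H0at k p))
  let ι : {v : G.V // G.fV v = p} → {v : G.V // G.fV v ≤ p} := fun v => ⟨v.1, v.2.le⟩
  have hι : Function.Injective ι := fun v w h => Subtype.ext (Subtype.mk.inj h)
  refine natCard_le_finrank_quotient_of_biorthogonal _
    (fun v => Submodule.Quotient.mk (Finsupp.single (ι v) (1 : k)))
    (fun v => (LinearMap.range (G.dr k p)).liftQ (Finsupp.lapply (ι v))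
      (LinearMap.range_le_ker_iff.mpr (G.lapply_comp_dr_eq_zero k hC (ι v) v.2)))
    (fun v => ?_) (fun v w hvw => ?_) (fun v => ?_)
  · refine (PersMod.rad_le_ker_iff _).mpr fun r hr x => ?_
    obtain ⟨y, rfl⟩ := Submodule.Quotient.mk_surjective _ x
    show Finsupp.mapDomain _ y (ι v) = 0
    refine Finsupp.mapDomain_of_notMem_range _ _ ?_
    rintro ⟨u, hu⟩
    exact (u.2.trans_lt hr).ne (congrArg (fun w => G.fV w.1) hu |>.trans v.2)
  · show Finsupp.single (ι w) (1 : k) (ι v) = 0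
    exact Finsupp.single_eq_of_ne (hι.ne hvw)
  · show Finsupp.single (ι v) (1 : k) (ι v) ≠ 0
    simp

def sourceComponent (e : G.E) : Set G.V :=
  {v | (G.delete e).connAt (G.fE e) (G.bnd e).1 v}

noncomputable def componentIndicator (e : G.E) (r : P) :
    ({v : G.V // G.fV v ≤ r} →₀ k) →ₗ[k] k :=
  Finsupp.linearCombination k fun v => (G.sourceComponent e).indicator 1 v.1

lemma componentIndicator_dr_single_of_ne {e : G.E} {r : P} (d : {d : G.E // G.fE d ≤ r})
    (hde : d.1 ≠ e) (hle : G.fE d.1 ≤ G.fE e) :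
    G.componentIndicator k e r (G.dr k r (Finsupp.single d 1)) = 0 := by
  have hts : (G.bnd d.1).2 ∈ G.sourceComponent e ↔ (G.bnd d.1).1 ∈ G.sourceComponent e :=
    ⟨fun h => h.tail ⟨⟨d.1, hde⟩, hle, Or.inr rfl⟩,
      fun h => h.tail ⟨⟨d.1, hde⟩, hle, Or.inl rfl⟩⟩
  rw [dr_single, componentIndicator, map_sub, Finsupp.linearCombination_single,
    Finsupp.linearCombination_single, Set.indicator_eq_indicator (g := 1) hts rfl, sub_self]

lemma componentIndicator_dr_single_self {e : G.E} (he : ¬ G.Deletable e) {r : P}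
    (hr : G.fE e ≤ r) :
    G.componentIndicator k e r (G.dr k r (Finsupp.single ⟨e, hr⟩ 1)) = -1 := by
  have hs : (G.bnd e).1 ∈ G.sourceComponent e := Relation.ReflTransGen.refl
  have ht : (G.bnd e).2 ∉ G.sourceComponent e := he
  simp [dr_single, componentIndicator, Set.indicator_of_mem hs, Set.indicator_of_notMem ht]

lemma componentIndicator_comp_dr_comp_emap {e : G.E} {r p : P} (hr : r < G.fE e)
    (hp : G.fE e = p) :
    G.componentIndicator k e p ∘ₗ G.dr k p ∘ₗ G.emap k (hr.trans_eq hp).le = 0 := by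
  refine Finsupp.lhom_ext fun d a => ?_
  rw [LinearMap.comp_apply, LinearMap.comp_apply, ← mul_one a, ← smul_eq_mul,
    ← Finsupp.smul_single, map_smul, map_smul, map_smul]
  show a • G.componentIndicator k e p (G.dr k p (Finsupp.mapDomain _ (Finsupp.single d 1))) = 0
  rw [Finsupp.mapDomain_single, G.componentIndicator_dr_single_of_ne k (r := p) ⟨d.1, _⟩
    (fun h => (d.2.trans_lt hr).ne (congrArg G.fE h)) (d.2.trans hr.le), smul_zero]

lemma natCard_fE_fiber_le_finrank (hD : ∀ e, ¬ G.Deletable e) (p : P) :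
    Nat.card {e : G.E // G.fE e = p} ≤
      finrank k ((G.KMod k).obj p ⧸ (G.KMod k).rad p) := by
  have : Module.Finite k ((G.KMod k).obj p) :=
    inferInstanceAs (Module.Finite k (LinearMap.range (G.dr k p)))
  let ι : {e : G.E // G.fE e = p} → {e : G.E // G.fE e ≤ p} := fun e => ⟨e.1, e.2.le⟩
  refine natCard_le_finrank_quotient_of_biorthogonal _
    (fun e => (G.dr k p).rangeRestrict (Finsupp.single (ι e) 1))
    (fun e => G.componentIndicator k e.1 p ∘ₗ (LinearMap.range (G.dr k p)).subtype)
    (fun e => ?_) (fun e d hed => ?_) (fun e => ?_)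
  · refine (PersMod.rad_le_ker_iff _).mpr fun r hr x => ?_
    obtain ⟨_, y, rfl⟩ := x
    have hnat := LinearMap.congr_fun (G.dNat k hr.le) y
    show G.componentIndicator k e.1 p (G.vmap k hr.le (G.dr k r y)) = 0
    rw [← LinearMap.comp_apply (G.vmap k hr.le), ← hnat]
    exact LinearMap.congr_fun
      (G.componentIndicator_comp_dr_comp_emap k (hr.trans_eq e.2.symm) e.2) y
  · exact G.componentIndicator_dr_single_of_ne k (ι d)
      (fun h => hed (Subtype.ext h.symm)) (d.2.trans e.2.symm).le
  · show G.componentIndicator k e.1 p (G.dr k p (Finsupp.single ⟨e.1, e.2.le⟩ 1)) ≠ 0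
    rw [G.componentIndicator_dr_single_self k (hD e.1)]
    exact neg_ne_zero.mpr one_ne_zero

end FGrph

lemma isProjCover_of_natCard_fiber_le {k : Type} [Field k] {I : Type} [Fintype I]
    {f : I → P} {M : PersMod P k} {g : PersHom k (freePers k I f) M} (hg : g.Surj)
    (hf : ∀ p, Nat.card {i : I // f i = p} ≤ finrank k (M.obj p ⧸ M.rad p)) :
    IsProjCover f M g ∧
      ∀ (J : Type) (_ : Fintype J) (fJ : J → P) (g' : PersHom k (freePers k J fJ) M),
        IsProjCover fJ M g' →
          ∀ p, Nat.card {j : J // fJ j = p} = Nat.card {i : I // f i = p} := by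
  have hfiber {J : Type} [Fintype J] {fJ : J → P} (g' : PersHom k (freePers k J fJ) M)
      (hg' : g'.Surj) (p : P) : Nat.card {i : I // f i = p} ≤ Nat.card {j : J // fJ j = p} :=
    (hf p).trans (g'.finrank_quotient_rad_le hg' p)
  exact ⟨⟨hg, fun _ _ _ g' hg' => Fintype.card_le_card_of_natCard_fiber_le (hfiber g' hg')⟩,
    fun _ _ _ g' hg' => natCard_fiber_eq_of_le_of_card_le (hfiber g' hg'.1) (hg'.2 I _ f g hg)⟩

/-- if `(G,f)` is a minimal filtered graph (no collapsible and no deletable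
edges), then `⊕_{e∈E} P_{f(e)} → ⊕_{v∈V} P_{f(v)} → H₀(G,f)` is a minimal projective
presentation: the augmentation is a projective cover and the map from `⊕_e P_{f(e)}`
onto its kernel is a projective cover.  Consequently `β₀(H₀(G,f)) = Σ_{v∈V} δ_{f(v)}`
and `β₁(H₀(G,f)) = Σ_{e∈E} δ_{f(e)}` (expressed via counts for arbitrary covers). -/
theorem minimal_graph_minimal_presentation (k : Type) [Field k] (G : FGrph P)
    (hmin : ∀ e : G.E, ¬ G.Collapsible e ∧ ¬ G.Deletable e) :
    IsProjCover G.fV (G.H0Mod k) (G.covHom k) ∧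
    IsProjCover G.fE (G.KMod k) (G.kerCov k) ∧
    (∀ (J : Type) (_ : Fintype J) (fJ : J → P)
      (g' : PersHom k (freePers k J fJ) (G.H0Mod k)),
        IsProjCover fJ (G.H0Mod k) g' →
          ∀ p : P, Nat.card {j : J // fJ j = p} = Nat.card {v : G.V // G.fV v = p}) ∧
    (∀ (J : Type) (_ : Fintype J) (fJ : J → P)
      (g' : PersHom k (freePers k J fJ) (G.KMod k)),
        IsProjCover fJ (G.KMod k) g' →
          ∀ p : P, Nat.card {j : J // fJ j = p} = Nat.card {e : G.E // G.fE e = p}) := by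
  obtain ⟨hV, hβ₀⟩ := isProjCover_of_natCard_fiber_le (g := G.covHom k)
    (fun r => Submodule.mkQ_surjective _)
    (G.natCard_fV_fiber_le_finrank k fun e => (hmin e).1)
  obtain ⟨hE, hβ₁⟩ := isProjCover_of_natCard_fiber_le (g := G.kerCov k)
    (fun r => (G.dr k r).surjective_rangeRestrict)
    (G.natCard_fE_fiber_le_finrank k fun e => (hmin e).2)
  exact ⟨hV, hE, hβ₀, hβ₁⟩
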